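/- arXiv:cs/0612108 — 5 statements merged into one kernel-verified Lean document; each statement's English description precedes it below -/
import Mathlib

section
/- Global preferences are acyclic: suppose each peer p carries an intrinsic mark m(p) ∈ ℝ and each peer prefers neighbors with higher marks, i.e., p prefers q to r whenever m(q) > m(r) (marks of the neighbors of any fixed peer being pairwise distinct, so that preferences are strict). Then the resulting b-matching preference instance is acyclic: there is no sequence of k ≥ 3 distinct peers p_1, …, p_k such that for every i (indices modulo k) p_{i-1} and p_{i+1} are neighbors of p_i and p_i prefers p_{i+1} to p_{i-1}. -/
/-!
A formalization of b-matching preference instances (peers, acceptance graph,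
quotas, preference lists given by ranks), configurations, blocking pairs,
stability, active initiatives, loving pairs, and acyclicity.
-/

open Finset

/-- A b-matching preference instance on a finite set `P` of peers:
an acceptance graph `G`, quotas `b`, and for each peer `p` a rank function
(`rank p q` is the position of `q` in `p`'s preference list, smaller is better),
injective on the neighbors of `p` (strict preferences). -/
structure PrefInstance (P : Type*) [Fintype P] [DecidableEq P] where
  G : SimpleGraph P
  b : P → ℕ
  rank : P → P → ℕ
  rank_injOn : ∀ p : P, Set.InjOn (rank p) {q | G.Adj p q}

namespace PrefInstance

variable {P : Type*} [Fintype P] [DecidableEq P] (I : PrefInstance P)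

/-- `p` prefers `q` to `r` (both neighbors of `p`, `q` ranked better). -/
def Prefers (p q r : P) : Prop :=
  I.G.Adj p q ∧ I.G.Adj p r ∧ I.rank p q < I.rank p r

/-- The instance is acyclic: there is no preference cycle, i.e. no `k ≥ 3`
distinct peers `p_1, …, p_k` (indices modulo `k`) such that each `p_i`
prefers `p_{i+1}` to `p_{i-1}`. -/
def Acyclic : Prop :=
  ¬ ∃ (k : ℕ) (f : ZMod k → P), 3 ≤ k ∧ Function.Injective f ∧
      ∀ i : ZMod k, I.Prefers (f i) (f (i + 1)) (f (i - 1))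

/-- The mates of `p` in a set `C` of edges. -/
def mates (C : Finset (Sym2 P)) (p : P) : Finset P :=
  Finset.univ.filter fun q => s(p, q) ∈ C

/-- `C` is a configuration: a set of edges of the acceptance graph in which every
peer `p` has at most `b p` mates. -/
def IsConfig (C : Finset (Sym2 P)) : Prop :=
  (∀ e ∈ C, e ∈ I.G.edgeSet) ∧ ∀ p : P, (mates C p).card ≤ I.b p

/-- `p` is under-mated in `C`: it has fewer than `b p` mates. -/
def UnderMated (C : Finset (Sym2 P)) (p : P) : Prop :=
  (mates C p).card < I.b p

/-- `p` is willing to pair with `q`: it is under-mated, or it prefers `q`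
to its worst mate in `C`. -/
def Willing (C : Finset (Sym2 P)) (p q : P) : Prop :=
  I.UnderMated C p ∨ ∃ w ∈ mates C p, I.rank p q < I.rank p w

/-- `{p, q}` is a blocking pair for `C`: an edge of the acceptance graph not in
`C` such that each endpoint is under-mated or prefers the other to its worst mate. -/
def BlockingPair (C : Finset (Sym2 P)) (p q : P) : Prop :=
  I.G.Adj p q ∧ s(p, q) ∉ C ∧ I.Willing C p q ∧ I.Willing C q p

/-- A configuration is stable if it admits no blocking pair. -/
def IsStable (C : Finset (Sym2 P)) : Prop :=
  I.IsConfig C ∧ ∀ p q : P, ¬ I.BlockingPair C p q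

/-- The edges to be dropped at `p` when `p` gets a new mate: none if `p` is
under-mated, otherwise the edge joining `p` to its worst mate in `C`. -/
def dropEdges (C : Finset (Sym2 P)) (p : P) : Finset (Sym2 P) :=
  if (mates C p).card < I.b p then ∅
  else ((mates C p).filter fun w => ∀ r ∈ mates C p, I.rank p r ≤ I.rank p w).image
      fun w => s(p, w)

/-- The configuration produced by resolving the blocking pair `{p, q}` of `C`:
add the edge `{p, q}` and, for each of `p` and `q` already at full quota,
remove the edge joining it to its worst mate. -/
def resolve (C : Finset (Sym2 P)) (p q : P) : Finset (Sym2 P) :=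
  insert s(p, q) (C \ (I.dropEdges C p ∪ I.dropEdges C q))

/-- `C'` is obtained from `C` by an active initiative. -/
def ActiveStep (C C' : Finset (Sym2 P)) : Prop :=
  ∃ p q : P, I.BlockingPair C p q ∧ C' = I.resolve C p q

/-- `{p, q}` is a loving pair: an edge of the acceptance graph whose endpoints
rank each other first. -/
def LovingPair (p q : P) : Prop :=
  I.G.Adj p q ∧ (∀ r : P, I.G.Adj p r → I.rank p q ≤ I.rank p r) ∧
    ∀ r : P, I.G.Adj q r → I.rank q p ≤ I.rank q r

open scoped Classical in
/-- The best-mate initiative of peer `p` at configuration `C`: resolve the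
blocking pair `{p, q}` where `q` is the peer `p` prefers most among all peers
forming a blocking pair with `p`; if `p` belongs to no blocking pair, `C` is
left unchanged. -/
noncomputable def bestMateInit (C : Finset (Sym2 P)) (p : P) : Finset (Sym2 P) :=
  if h : ∃ q : P, I.BlockingPair C p q ∧
      ∀ r : P, I.BlockingPair C p r → I.rank p q ≤ I.rank p r then
    I.resolve C p h.choose
  else C

end PrefInstance

variable {P : Type*} [Fintype P] [DecidableEq P]

open PrefInstance

/-- Global preferences are acyclic: if each peer `p` carries an
intrinsic mark `m p` (marks of the neighbors of any fixed peer being pairwise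
distinct) and every peer prefers neighbors with higher marks, then the instance
is acyclic. -/
theorem global_preferences_acyclic (I : PrefInstance P) (m : P → ℝ)
    (hpref : ∀ p q r : P, I.G.Adj p q → I.G.Adj p r → m r < m q → I.Prefers p q r)
    (hdistinct : ∀ p q r : P, I.G.Adj p q → I.G.Adj p r → q ≠ r → m q ≠ m r) :
    I.Acyclic := by
  rintro ⟨k, f, hk, hinj, hcyc⟩
  haveI : NeZero k := ⟨by omega⟩
  obtain ⟨j, -, hj⟩ := Finset.exists_max_image Finset.univ (fun i => m (f i))
    ⟨0, Finset.mem_univ 0⟩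
  obtain ⟨h1, h2, h3⟩ := hcyc (j + 1)
  have hne : f (j + 1 + 1) ≠ f (j + 1 - 1) := by
    intro h
    have := hinj h
    have h2 : ((2 : ℕ) : ZMod k) = 0 := by
      have : (j + 1 + 1 : ZMod k) - (j + 1 - 1) = 0 := by rw [this]; ring
      push_cast
      linear_combination this
    rw [ZMod.natCast_eq_zero_iff] at h2
    exact absurd (Nat.le_of_dvd (by norm_num) h2) (by omega)
  have hmne := hdistinct _ _ _ h1 h2 hne
  have hlt : m (f (j + 1 - 1)) < m (f (j + 1 + 1)) := by
    rcases lt_or_gt_of_ne hmne with h | h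
    · exact absurd (hpref _ _ _ h2 h1 h).2.2 h3.asymm
    · exact h
  have heq : j + 1 - 1 = j := by ring
  rw [heq] at hlt
  exact absurd (hj (j + 1 + 1) (Finset.mem_univ _)) (not_le.mpr hlt)
end

section
/- Symmetric preferences are acyclic: suppose each peer p gives a mark m(p,q) ∈ ℝ to each of its neighbors q, the marks are symmetric (m(p,q) = m(q,p) for all neighbors p, q), and each peer prefers neighbors with higher marks, i.e., p prefers q to r whenever m(p,q) > m(p,r) (the marks m(p,·) on the neighbors of any fixed p being pairwise distinct, so that preferences are strict). Then the resulting b-matching preference instance is acyclic: there is no sequence of k ≥ 3 distinct peers p_1, …, p_k such that for every i (indices modulo k) p_{i-1} and p_{i+1} are neighbors of p_i and p_i prefers p_{i+1} to p_{i-1}. -/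
/-!
A formalization of b-matching preference instances (peers, acceptance graph,
quotas, preference lists given by ranks), configurations, blocking pairs,
stability, active initiatives, loving pairs, and acyclicity.
-/

open Finset

variable {P : Type*} [Fintype P] [DecidableEq P]

open PrefInstance

/-- Symmetric preferences are acyclic: if each peer `p` gives a
mark `m p q` to each neighbor `q`, marks are symmetric, marks given by a fixed
peer to its neighbors are pairwise distinct, and every peer prefers neighbors
with higher marks, then the instance is acyclic. -/
theorem symmetric_preferences_acyclic (I : PrefInstance P) (m : P → P → ℝ)
    (hsym : ∀ p q : P, I.G.Adj p q → m p q = m q p)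
    (hpref : ∀ p q r : P, I.G.Adj p q → I.G.Adj p r → m p r < m p q → I.Prefers p q r)
    (hdistinct : ∀ p q r : P, I.G.Adj p q → I.G.Adj p r → q ≠ r → m p q ≠ m p r) :
    I.Acyclic := by
  rintro ⟨k, f, hk, hinj, hcyc⟩
  haveI : NeZero k := ⟨by omega⟩
  -- marks strictly increase along the cycle
  have key : ∀ i : ZMod k, m (f i) (f (i - 1)) < m (f i) (f (i + 1)) := by
    intro i
    obtain ⟨hadj1, hadj2, hrank⟩ := hcyc i
    rcases lt_trichotomy (m (f i) (f (i + 1))) (m (f i) (f (i - 1))) with h | h | h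
    · exact absurd (hpref _ _ _ hadj2 hadj1 h).2.2 (by omega)
    · have hne : f (i + 1) ≠ f (i - 1) := fun he => by rw [he] at hrank; omega
      exact absurd h (hdistinct _ _ _ hadj1 hadj2 hne)
    · exact h
  set g : ZMod k → ℝ := fun i => m (f i) (f (i + 1)) with hg
  have hmono : ∀ i : ZMod k, g i < g (i + 1) := by
    intro i
    have := key (i + 1)
    have hs := hsym (f (i + 1)) (f (i + 1 + 1)) (hcyc (i + 1)).1
    simp only [add_sub_cancel_right] at this
    calc g i = m (f i) (f (i + 1)) := rfl
      _ = m (f (i + 1)) (f i) := hsym _ _ (hcyc i).1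
      _ < m (f (i + 1)) (f (i + 1 + 1)) := this
      _ = g (i + 1) := rfl
  obtain ⟨i0, hi0⟩ := Finite.exists_max g
  exact absurd (hi0 (i0 + 1)) (not_le.mpr (hmono i0))
end

section
/- Complementary preferences are acyclic: suppose each peer p possesses a finite set S(p) of resources and each peer prefers neighbors possessing more of its missing resources, i.e., p prefers q to r whenever |S(q) \ S(p)| > |S(r) \ S(p)| (the cardinalities |S(q) \ S(p)| for the neighbors q of any fixed p being pairwise distinct, so that preferences are strict). Then the resulting b-matching preference instance is acyclic: there is no sequence of k ≥ 3 distinct peers p_1, …, p_k such that for every i (indices modulo k) p_{i-1} and p_{i+1} are neighbors of p_i and p_i prefers p_{i+1} to p_{i-1}. -/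
/-!
A formalization of b-matching preference instances (peers, acceptance graph,
quotas, preference lists given by ranks), configurations, blocking pairs,
stability, active initiatives, loving pairs, and acyclicity.
-/

open Finset

variable {P : Type*} [Fintype P] [DecidableEq P]

open PrefInstance

/-- Complementary preferences are acyclic: if each peer `p`
possesses a finite set `S p` of resources and prefers neighbors possessing more
of its missing resources (the numbers of missing resources offered by the
neighbors of a fixed peer being pairwise distinct), then the instance is
acyclic. -/
theorem complementary_preferences_acyclic {R : Type*} [DecidableEq R]
    (I : PrefInstance P) (S : P → Finset R)
    (hpref : ∀ p q r : P, I.G.Adj p q → I.G.Adj p r →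
      (S r \ S p).card < (S q \ S p).card → I.Prefers p q r)
    (hdistinct : ∀ p q r : P, I.G.Adj p q → I.G.Adj p r → q ≠ r →
      (S q \ S p).card ≠ (S r \ S p).card) :
    I.Acyclic := by
  rintro ⟨k, f, hk, hinj, hcyc⟩
  haveI : NeZero k := ⟨by omega⟩
  -- From Prefers derive cardinality inequality
  have key : ∀ i : ZMod k,
      (S (f (i - 1)) \ S (f i)).card < (S (f (i + 1)) \ S (f i)).card := by
    intro i
    obtain ⟨hadj1, hadj2, hrank⟩ := hcyc i
    have hne : f (i + 1) ≠ f (i - 1) := by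
      intro h
      have h2 : (i + 1 : ZMod k) = i - 1 := hinj h
      have : ((2 : ℕ) : ZMod k) = 0 := by push_cast; linear_combination h2
      have := (ZMod.natCast_eq_zero_iff 2 k).mp this
      have := Nat.le_of_dvd (by norm_num) this
      omega
    by_contra hle
    push_neg at hle
    rcases lt_or_eq_of_le hle with hlt | heq
    · obtain ⟨-, -, h'⟩ := hpref (f i) (f (i - 1)) (f (i + 1)) hadj2 hadj1 hlt
      omega
    · exact hdistinct (f i) (f (i + 1)) (f (i - 1)) hadj1 hadj2 hne heq
  -- weight of edge i : |S (f i) ∪ S (f (i+1))|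
  set g : ZMod k → ℕ := fun i => (S (f i) ∪ S (f (i + 1))).card with hg
  have hmono : ∀ i : ZMod k, g (i - 1) < g i := by
    intro i
    have h1 : (S (f (i - 1)) \ S (f i)).card + (S (f i)).card
        = (S (f (i - 1)) ∪ S (f i)).card := Finset.card_sdiff_add_card _ _
    have h2 : (S (f (i + 1)) \ S (f i)).card + (S (f i)).card
        = (S (f (i + 1)) ∪ S (f i)).card := Finset.card_sdiff_add_card _ _
    have h3 := key i
    have e1 : g (i - 1) = (S (f (i - 1)) ∪ S (f i)).card := by
      simp only [hg]; congr 2; ring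
    have e2 : g i = (S (f (i + 1)) ∪ S (f i)).card := by
      simp only [hg]; rw [Finset.union_comm]
    omega
  obtain ⟨i, hi⟩ := Finite.exists_max g
  have := hmono (i + 1)
  simp only [add_sub_cancel_right] at this
  exact absurd (hi (i + 1)) (by omega)
end

section
/- With the best mate strategy, a loving pair is formed as soon as one of its peers has the initiative: let {p,q} be a loving pair of a b-matching preference instance with b(p) ≥ 1 and b(q) ≥ 1, and let C be a configuration with {p,q} ∉ C. Then q is the peer p prefers most among all peers forming a blocking pair with p at C, and the configuration produced by p's best-mate initiative at C contains the edge {p,q}. -/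
/-!
A formalization of b-matching preference instances (peers, acceptance graph,
quotas, preference lists given by ranks), configurations, blocking pairs,
stability, active initiatives, loving pairs, and acyclicity.
-/

open Finset

variable {P : Type*} [Fintype P] [DecidableEq P]

open PrefInstance

/-- With the best mate strategy, a loving pair is formed as
soon as one of its peers has the initiative: if `{p, q}` is a loving pair with
`b p ≥ 1`, `b q ≥ 1`, and `C` is a configuration with `{p, q} ∉ C`, then `q` is
the peer `p` prefers most among all peers forming a blocking pair with `p` at
`C`, and the configuration produced by `p`'s best-mate initiative at `C`
contains the edge `{p, q}`. -/
theorem lovingPair_bestMate (I : PrefInstance P) (p q : P) (hpq : I.LovingPair p q)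
    (hbp : 1 ≤ I.b p) (hbq : 1 ≤ I.b q)
    (C : Finset (Sym2 P)) (hC : I.IsConfig C) (hnotin : s(p, q) ∉ C) :
    I.BlockingPair C p q ∧
      (∀ r : P, I.BlockingPair C p r → I.rank p q ≤ I.rank p r) ∧
      s(p, q) ∈ I.bestMateInit C p := by
  obtain ⟨hadj, hpfirst, hqfirst⟩ := hpq
  -- mates are neighbors
  have hmate : ∀ x w : P, w ∈ PrefInstance.mates C x → I.G.Adj x w := by
    intro x w hw
    have : s(x, w) ∈ C := by
      simpa [PrefInstance.mates] using hw
    exact (SimpleGraph.mem_edgeSet I.G).1 (hC.1 _ this)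
  have hwillp : I.Willing C p q := by
    by_cases hu : I.UnderMated C p
    · exact Or.inl hu
    · right
      have hcard : (PrefInstance.mates C p).card = I.b p :=
        le_antisymm (hC.2 p) (not_lt.1 hu)
      have hne : (PrefInstance.mates C p).Nonempty := by
        rw [← Finset.card_pos, hcard]; exact hbp
      obtain ⟨w, hw⟩ := hne
      refine ⟨w, hw, ?_⟩
      have hadjw := hmate p w hw
      have hle := hpfirst w hadjw
      rcases lt_or_eq_of_le hle with h | h
      · exact h
      · exfalso
        have : q = w := I.rank_injOn p hadj hadjw h
        subst this
        exact hnotin (by simpa [PrefInstance.mates] using hw)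
  have hwillq : I.Willing C q p := by
    by_cases hu : I.UnderMated C q
    · exact Or.inl hu
    · right
      have hcard : (PrefInstance.mates C q).card = I.b q :=
        le_antisymm (hC.2 q) (not_lt.1 hu)
      have hne : (PrefInstance.mates C q).Nonempty := by
        rw [← Finset.card_pos, hcard]; exact hbq
      obtain ⟨w, hw⟩ := hne
      refine ⟨w, hw, ?_⟩
      have hadjw := hmate q w hw
      have hle := hqfirst w hadjw
      rcases lt_or_eq_of_le hle with h | h
      · exact h
      · exfalso
        have : p = w := I.rank_injOn q hadj.symm hadjw h
        subst this
        exact hnotin (by simpa [PrefInstance.mates, Sym2.eq_swap] using hw)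
  have hbp' : I.BlockingPair C p q := ⟨hadj, hnotin, hwillp, hwillq⟩
  have hmin : ∀ r : P, I.BlockingPair C p r → I.rank p q ≤ I.rank p r :=
    fun r hr => hpfirst r hr.1
  refine ⟨hbp', hmin, ?_⟩
  classical
  have hex : ∃ q' : P, I.BlockingPair C p q' ∧
      ∀ r : P, I.BlockingPair C p r → I.rank p q' ≤ I.rank p r := ⟨q, hbp', hmin⟩
  rw [PrefInstance.bestMateInit, dif_pos hex]
  have hc := hex.choose_spec
  have heq : q = hex.choose := by
    apply I.rank_injOn p hadj hc.1.1
    exact le_antisymm (hmin _ hc.1) (hc.2 q hbp')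
  rw [PrefInstance.resolve, ← heq]
  exact Finset.mem_insert_self _ _
end

section
/- In an acyclic b-matching preference instance, every configuration C that is not stable admits a blocking pair that belongs to the unique stable configuration of the instance. -/
/-!
A formalization of b-matching preference instances (peers, acceptance graph,
quotas, preference lists given by ranks), configurations, blocking pairs,
stability, active initiatives, loving pairs, and acyclicity.
-/

open Finset

variable {P : Type*} [Fintype P] [DecidableEq P]

open PrefInstance

/-!
Acyclicity forces a loving pair among the peers of positive quota: otherwise, following each
peer's favourite neighbour, `x ↦ g x`, every peer `g x` on the walk would prefer `g (g x)` to `x`,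
and the walk eventually closes into a preference cycle. A loving pair `{p, q}` of peers with
positive quota lies in every stable configuration, and it blocks `C` unless it already lies in
`C`. In that case remove `{p, q}` from `C` and from the acceptance graph and lower the quotas of
`p` and `q` by one: blocking pairs and stable configurations of the smaller instance correspond
to those of the original one, so induction on `|C|` applies.
-/

theorem Function.exists_iterate_mem_periodicPts {α : Type*} [Finite α] (f : α → α) (x : α) :
    ∃ n, f^[n] x ∈ Function.periodicPts f := by
  obtain ⟨m, n, hne, heq⟩ := Finite.exists_ne_map_eq_of_infinite (f^[·] x)
  wlog hlt : m < n generalizing m n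
  · exact this n m hne.symm heq.symm (by omega)
  refine ⟨m, Function.mk_mem_periodicPts (Nat.sub_pos_of_lt hlt) ?_⟩
  change f^[n - m] (f^[m] x) = f^[m] x
  rw [← Function.iterate_add_apply, Nat.sub_add_cancel hlt.le]
  exact heq.symm

theorem ZMod.three_le_of_one_ne_neg_one {k : ℕ} [NeZero k] (h : (1 : ZMod k) ≠ -1) :
    3 ≤ k := by
  by_contra hk
  interval_cases k
  · exact NeZero.ne 0 rfl
  all_goals exact h (by decide)

namespace PrefInstance

section Preferences

variable {I : PrefInstance P} {p q r : P}

lemma rank_lt_of_le_of_ne (hq : I.G.Adj p q) (hr : I.G.Adj p r)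
    (hle : I.rank p q ≤ I.rank p r) (hne : q ≠ r) : I.rank p q < I.rank p r :=
  lt_of_le_of_ne hle fun h => hne (I.rank_injOn p hq hr h)

lemma Prefers.ne (h : I.Prefers p q r) : q ≠ r := by
  rintro rfl
  exact lt_irrefl _ h.2.2

lemma Acyclic.mono {J : PrefInstance P} (hI : I.Acyclic) (hG : J.G ≤ I.G)
    (hrank : J.rank = I.rank) : J.Acyclic := by
  rintro ⟨k, f, hk, hf, hpref⟩
  refine hI ⟨k, f, hk, hf, fun i => ?_⟩
  obtain ⟨h₁, h₂, h₃⟩ := hpref i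
  exact ⟨hG h₁, hG h₂, hrank ▸ h₃⟩

/-- The periodic orbit of `g` through a point of `s` is a preference cycle. -/
lemma Acyclic.not_forall_prefers_apply_apply (hI : I.Acyclic) {g : P → P} {s : Set P}
    (hs : Set.MapsTo g s s) (hne : s.Nonempty) :
    ¬ ∀ x ∈ s, I.Prefers (g x) (g (g x)) x := by
  intro hpref
  obtain ⟨x, hx⟩ := hne
  obtain ⟨n, hy⟩ := Function.exists_iterate_mem_periodicPts g x
  set y := g^[n] x
  set k := Function.minimalPeriod g y
  have : NeZero k := ⟨(Function.minimalPeriod_pos_of_mem_periodicPts hy).ne'⟩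
  let f : ZMod k → P := fun i => g^[i.val] y
  have hf_mem : ∀ i, f i ∈ s := fun i => hs.iterate _ (hs.iterate n hx)
  have hf_succ : ∀ i, f (i + 1) = g (f i) := by
    intro i
    rw [← ZMod.natCast_zmod_val i, ← Nat.cast_succ]
    simp only [f, ZMod.val_natCast]
    rw [Function.iterate_mod_minimalPeriod_eq, Function.iterate_mod_minimalPeriod_eq,
      Function.iterate_succ_apply']
  have hf_inj : Function.Injective f := fun i j h =>
    ZMod.val_injective k
      (Function.iterate_injOn_Iio_minimalPeriod (ZMod.val_lt i) (ZMod.val_lt j) h)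
  have hcycle : ∀ i, I.Prefers (f i) (f (i + 1)) (f (i - 1)) := by
    intro i
    have hi : f i = g (f (i - 1)) := by rw [← hf_succ, sub_add_cancel]
    rw [hf_succ, hi]
    exact hpref _ (hf_mem _)
  have hk : 3 ≤ k := ZMod.three_le_of_one_ne_neg_one fun h =>
    (hcycle 0).ne (by rw [zero_add, zero_sub]; exact congrArg f h)
  exact hI ⟨k, f, hk, hf_inj, hcycle⟩

lemma Acyclic.exists_lovingPair (hI : I.Acyclic) (hpq : I.G.Adj p q) :
    ∃ p q, I.LovingPair p q := by
  by_contra hno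
  push Not at hno
  let s : Set P := {x | ∃ y, I.G.Adj x y}
  have hbest :
      ∀ x ∈ s, ∃ y, I.G.Adj x y ∧ ∀ r, I.G.Adj x r → I.rank x y ≤ I.rank x r :=
    fun x hx => Set.exists_min_image {y | I.G.Adj x y} (I.rank x) (Set.toFinite _) hx
  choose! g hg_adj hg_best using hbest
  have hs : Set.MapsTo g s s := fun x hx => ⟨x, (hg_adj x hx).symm⟩
  refine hI.not_forall_prefers_apply_apply hs ⟨p, q, hpq⟩ fun x hx => ?_
  have hgg : g (g x) ≠ x := fun h =>
    hno x (g x)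
      ⟨hg_adj x hx, hg_best x hx, by simpa only [h] using hg_best (g x) (hs hx)⟩
  have hadj := hg_adj (g x) (hs hx)
  have hadj' := (hg_adj x hx).symm
  exact ⟨hadj, hadj', rank_lt_of_le_of_ne hadj hadj' (hg_best _ (hs hx) x hadj') hgg⟩

lemma LovingPair.symm (h : I.LovingPair p q) : I.LovingPair q p :=
  ⟨h.1.symm, h.2.2, h.2.1⟩

lemma LovingPair.rank_le_of_mk_eq (h : I.LovingPair p q) {x w y : P} (he : s(x, w) = s(p, q))
    (hy : I.G.Adj x y) : I.rank x w ≤ I.rank x y := by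
  rcases Sym2.eq_iff.mp he with ⟨rfl, rfl⟩ | ⟨rfl, rfl⟩
  exacts [h.2.1 y hy, h.2.2 y hy]

end Preferences

lemma mem_mates {C : Finset (Sym2 P)} {p q : P} : q ∈ mates C p ↔ s(p, q) ∈ C := by
  simp [mates]

lemma card_mates_erase_add {C : Finset (Sym2 P)} {e : Sym2 P} (he : e ∈ C) (x : P) :
    (mates (C.erase e) x).card + (mates {e} x).card = (mates C x).card := by
  rw [← Finset.card_filter_add_card_filter_not (s := mates C x) (fun w => s(x, w) ≠ e)]
  congr 2 <;> ext w <;> simp only [mem_mates, Finset.mem_erase, Finset.mem_filter,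
    Finset.mem_singleton, ne_eq, not_not] <;> grind

section Configurations

variable {I : PrefInstance P} {C : Finset (Sym2 P)} {x y : P}

lemma IsConfig.b_ne_zero (hC : I.IsConfig C) (h : s(x, y) ∈ C) : I.b x ≠ 0 := by
  have := Finset.card_pos.mpr ⟨y, mem_mates.mpr h⟩
  have := hC.2 x
  omega

lemma Willing.b_ne_zero (hC : I.IsConfig C) (h : I.Willing C x y) : I.b x ≠ 0 := by
  rcases h with h | ⟨w, hw, -⟩
  · exact Nat.ne_zero_of_lt h
  · exact hC.b_ne_zero (mem_mates.mp hw)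

abbrev pruneZeroQuota (I : PrefInstance P) : PrefInstance P where
  G :=
    { Adj x y := I.G.Adj x y ∧ I.b x ≠ 0 ∧ I.b y ≠ 0
      symm := ⟨fun _ _ ⟨h, hx, hy⟩ => ⟨h.symm, hy, hx⟩⟩
      loopless := ⟨fun x h => I.G.loopless.irrefl x h.1⟩ }
  b := I.b
  rank := I.rank
  rank_injOn p := (I.rank_injOn p).mono fun _ h => h.1

lemma Acyclic.pruneZeroQuota (hI : I.Acyclic) : I.pruneZeroQuota.Acyclic :=
  hI.mono (fun _ _ h => h.1) rfl

lemma IsConfig.pruneZeroQuota_adj (hC : I.IsConfig C) (h : s(x, y) ∈ C) :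
    I.pruneZeroQuota.G.Adj x y :=
  ⟨hC.1 _ h, hC.b_ne_zero h, hC.b_ne_zero (Sym2.eq_swap ▸ h)⟩

lemma BlockingPair.pruneZeroQuota_adj (hC : I.IsConfig C) (h : I.BlockingPair C x y) :
    I.pruneZeroQuota.G.Adj x y :=
  ⟨h.1, h.2.2.1.b_ne_zero hC, h.2.2.2.b_ne_zero hC⟩

variable {p q : P}

lemma LovingPair.willing (h : I.pruneZeroQuota.LovingPair p q) (hC : I.IsConfig C)
    (hpq : s(p, q) ∉ C) : I.Willing C p q := by
  by_cases hp : I.UnderMated C p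
  · exact Or.inl hp
  obtain ⟨w, hw⟩ : (mates C p).Nonempty := by
    rw [← Finset.card_pos]
    have := h.1.2.1
    unfold UnderMated at hp
    omega
  have hpw := hC.pruneZeroQuota_adj (mem_mates.mp hw)
  have hwq : q ≠ w := by
    rintro rfl
    exact hpq (mem_mates.mp hw)
  exact Or.inr ⟨w, hw, rank_lt_of_le_of_ne h.1.1 hpw.1 (h.2.1 w hpw) hwq⟩

lemma LovingPair.blockingPair (h : I.pruneZeroQuota.LovingPair p q) (hC : I.IsConfig C)
    (hpq : s(p, q) ∉ C) : I.BlockingPair C p q :=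
  ⟨h.1.1, hpq, h.willing hC hpq, h.symm.willing hC (Sym2.eq_swap ▸ hpq)⟩

lemma LovingPair.mem_of_isStable (h : I.pruneZeroQuota.LovingPair p q) {S : Finset (Sym2 P)}
    (hS : I.IsStable S) : s(p, q) ∈ S := by
  by_contra hpq
  exact hS.2 p q (h.blockingPair hS.1 hpq)

end Configurations

/-- The instance left once `e` is fixed: `(mates {e} x).card` is `1` at the endpoints of `e`
and `0` elsewhere. -/
abbrev residual (I : PrefInstance P) (e : Sym2 P) : PrefInstance P where
  G := I.G.deleteEdges {e}
  b x := I.b x - (mates {e} x).card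
  rank := I.rank
  rank_injOn p := (I.rank_injOn p).mono fun _ h => h.1

section Residual

variable {I : PrefInstance P} {C : Finset (Sym2 P)} {e : Sym2 P} {x y : P}

lemma Acyclic.residual (hI : I.Acyclic) : (I.residual e).Acyclic :=
  hI.mono (fun _ _ h => h.1) rfl

lemma underMated_residual_iff (he : e ∈ C) :
    (I.residual e).UnderMated (C.erase e) x ↔ I.UnderMated C x := by
  have := card_mates_erase_add he x
  simp only [UnderMated]
  omega

lemma IsConfig.residual (hC : I.IsConfig C) (he : e ∈ C) :
    (I.residual e).IsConfig (C.erase e) := by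
  refine ⟨fun f hf => ?_, fun x => ?_⟩
  · rw [SimpleGraph.edgeSet_deleteEdges]
    exact ⟨hC.1 f (Finset.mem_of_mem_erase hf), (Finset.mem_erase.mp hf).1⟩
  · change _ ≤ I.b x - _
    have := card_mates_erase_add he x
    have := hC.2 x
    omega

lemma Willing.of_residual (he : e ∈ C) (h : (I.residual e).Willing (C.erase e) x y) :
    I.Willing C x y := by
  rcases h with h | ⟨w, hw, hlt⟩
  · exact Or.inl ((underMated_residual_iff he).mp h)
  · exact Or.inr ⟨w, mem_mates.mpr (Finset.mem_of_mem_erase (mem_mates.mp hw)), hlt⟩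

lemma Willing.residual (he : e ∈ C) (h : I.Willing C x y)
    (hbest : ∀ w, s(x, w) = e → I.rank x w ≤ I.rank x y) :
    (I.residual e).Willing (C.erase e) x y := by
  rcases h with h | ⟨w, hw, hlt⟩
  · exact Or.inl ((underMated_residual_iff he).mpr h)
  · have hwe : s(x, w) ≠ e := fun hwe => (hbest w hwe).not_gt hlt
    exact Or.inr ⟨w, mem_mates.mpr (Finset.mem_erase.mpr ⟨hwe, mem_mates.mp hw⟩), hlt⟩

lemma BlockingPair.of_residual (he : e ∈ C) (h : (I.residual e).BlockingPair (C.erase e) x y) :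
    I.BlockingPair C x y := by
  obtain ⟨hxy, hxyC, hx, hy⟩ := h
  obtain ⟨hxy, hxye⟩ := SimpleGraph.deleteEdges_adj.mp hxy
  refine ⟨hxy, fun hmem => hxyC (Finset.mem_erase.mpr ⟨hxye, hmem⟩), hx.of_residual he,
    hy.of_residual he⟩

lemma IsStable.residual {S : Finset (Sym2 P)} (hS : I.IsStable S) (he : e ∈ S) :
    (I.residual e).IsStable (S.erase e) :=
  ⟨hS.1.residual he, fun x y h => hS.2 x y (h.of_residual he)⟩

lemma BlockingPair.residual {p q : P} (hpq : I.pruneZeroQuota.LovingPair p q)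
    (hC : I.IsConfig C) (he : s(p, q) ∈ C) (h : I.BlockingPair C x y) :
    (I.residual s(p, q)).BlockingPair (C.erase s(p, q)) x y := by
  have hxy := h.pruneZeroQuota_adj hC
  have hxye : s(x, y) ∉ ({s(p, q)} : Set (Sym2 P)) := fun h' =>
    h.2.1 (Set.mem_singleton_iff.mp h' ▸ he)
  refine ⟨SimpleGraph.deleteEdges_adj.mpr ⟨h.1, hxye⟩,
    fun hmem => h.2.1 (Finset.mem_of_mem_erase hmem), ?_, ?_⟩
  · exact h.2.2.1.residual he fun w hw => hpq.rank_le_of_mk_eq hw hxy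
  · exact h.2.2.2.residual he fun w hw => hpq.rank_le_of_mk_eq hw hxy.symm

end Residual

lemma Acyclic.exists_blockingPair_forall_isStable_mem {I : PrefInstance P} (hI : I.Acyclic)
    {C : Finset (Sym2 P)} (hC : I.IsConfig C) {x y : P} (hxy : I.BlockingPair C x y) :
    ∃ p q, I.BlockingPair C p q ∧ ∀ S, I.IsStable S → s(p, q) ∈ S := by
  induction C using Finset.strongInduction generalizing I x y with
  | H C ih =>
    obtain ⟨p, q, hpq⟩ := hI.pruneZeroQuota.exists_lovingPair (hxy.pruneZeroQuota_adj hC)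
    by_cases hpqC : s(p, q) ∈ C
    · obtain ⟨u, v, huv, hmem⟩ := ih _ (Finset.erase_ssubset hpqC) hI.residual
        (hC.residual hpqC) (hxy.residual hpq hC hpqC)
      exact ⟨u, v, huv.of_residual hpqC, fun S hS =>
        Finset.mem_of_mem_erase (hmem _ (hS.residual (hpq.mem_of_isStable hS)))⟩
    · exact ⟨p, q, hpq.blockingPair hC hpqC, fun S => hpq.mem_of_isStable⟩

end PrefInstance

/-- In an acyclic instance, every configuration that is not
stable admits a blocking pair belonging to the unique stable configuration. -/
theorem acyclic_blockingPair_in_stable (I : PrefInstance P) (hI : I.Acyclic)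
    (C : Finset (Sym2 P)) (hC : I.IsConfig C) (hunstable : ¬ I.IsStable C) :
    ∃ p q : P, I.BlockingPair C p q ∧
      ∀ S : Finset (Sym2 P), I.IsStable S → s(p, q) ∈ S := by
  obtain ⟨x, y, hxy⟩ : ∃ x y, I.BlockingPair C x y := by
    by_contra h
    push Not at h
    exact hunstable ⟨hC, h⟩
  exact hI.exists_blockingPair_forall_isStable_mem hC hxy
end
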